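/- Let $c \in (0, 2\pi]$, $\alpha \in (0,1)$. There exists a constant $A > 0$ such that for all sufficiently small $\epsilon > 0$ the following holds: if $T_0, T_1, \ldots, T_N$ (with $N = \lfloor c/\epsilon^\alpha \rfloor$) are $1 \times \epsilon$ rectangles in $\mathbb{R}^2$ such that the long side of $T_i$ has directional angle $i \epsilon^\alpha$, then the Lebesgue measure of $\bigcup_i T_i$ is at least $A \epsilon^{1-\alpha}$. -/

import Mathlib

/-!
Only the first `M + 1 = ⌊c' / ε ^ α⌋ + 1` tubes are used, where `c' = min c (π / 2)`, so that any
two of them meet at an angle `θ ∈ (0, π / 2]`. The intersection of two `1 × ε` tubes at angle `θ`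
lies in the preimage of an `ε × ε` square under a linear map of determinant `sin θ`, so it has area
at most `ε ^ 2 / sin θ ≤ (π / 2) ε ^ 2 / θ` (Jordan's inequality). By the Bonferroni inequality
`|⋃ Tᵢ| ≥ ∑ |Tᵢ| - ∑_{j<i} |Tᵢ ∩ Tⱼ|`, and as the angles are `i ε ^ α`, the pair sum is a harmonic
sum; this gives `|⋃ Tᵢ| ≥ (M + 1) ε (1 - (π / 2) ε ^ (1 - α) (1 + log M))`. Since `log M ≲ log (1/ε)`
and `ε ^ (1 - α) log (1/ε) → 0`, the bracket is at least `1 / 2` for small `ε`, while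
`(M + 1) ε ≥ c' ε ^ (1 - α)`.
-/

open Real MeasureTheory

/-- A closed `1 × ε` rectangle (tube) in `ℝ²` whose long side has directional
angle `θ`, with corner at `p`. -/
def tube (θ ε : ℝ) (p : ℝ × ℝ) : Set (ℝ × ℝ) :=
  {x | ∃ s ∈ Set.Icc (0 : ℝ) 1, ∃ t ∈ Set.Icc (0 : ℝ) ε,
    x = p + s • (Real.cos θ, Real.sin θ) + t • (-Real.sin θ, Real.cos θ)}

open Finset Filter Topology Module

theorem LinearMap.det_toLin_finTwoProd {R : Type*} [CommRing R] (a b c d : R) :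
    LinearMap.det (Matrix.toLin (Basis.finTwoProd R) (Basis.finTwoProd R) !![a, b; c, d]) =
      a * d - b * c := by
  rw [LinearMap.det_toLin, Matrix.det_fin_two_of]

theorem volume_Icc_prod_Icc (a b c d : ℝ) :
    volume (Set.Icc a b ×ˢ Set.Icc c d) = ENNReal.ofReal (b - a) * ENNReal.ofReal (d - c) := by
  rw [Measure.volume_eq_prod, Measure.prod_prod, Real.volume_Icc, Real.volume_Icc]

theorem tube_eq_image (θ ε : ℝ) (p : ℝ × ℝ) :
    tube θ ε p = (p + ·) '' (Matrix.toLin (Basis.finTwoProd ℝ) (Basis.finTwoProd ℝ)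
      !![cos θ, -sin θ; sin θ, cos θ] '' (Set.Icc 0 1 ×ˢ Set.Icc 0 ε)) := by
  ext x
  simp only [tube, Set.image_image, Set.mem_image, Set.mem_prod, Prod.exists,
    Matrix.toLin_finTwoProd_apply]
  constructor
  · rintro ⟨s, hs, t, ht, rfl⟩
    exact ⟨s, t, ⟨hs, ht⟩, by ext <;> simp <;> ring⟩
  · rintro ⟨s, t, ⟨hs, ht⟩, rfl⟩
    exact ⟨s, hs, t, ht, by ext <;> simp <;> ring⟩

theorem volume_tube (θ ε : ℝ) (p : ℝ × ℝ) : volume (tube θ ε p) = ENNReal.ofReal ε := by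
  rw [tube_eq_image, Set.image_add_left, measure_preimage_add,
    Measure.addHaar_image_linearMap, LinearMap.det_toLin_finTwoProd, volume_Icc_prod_Icc]
  simp [← sq]

theorem isCompact_tube (θ ε : ℝ) (p : ℝ × ℝ) : IsCompact (tube θ ε p) := by
  rw [tube_eq_image]
  exact ((isCompact_Icc.prod isCompact_Icc).image
    (LinearMap.continuous_of_finiteDimensional _)).image (continuous_const_add p)

theorem measurableSet_tube (θ ε : ℝ) (p : ℝ × ℝ) : MeasurableSet (tube θ ε p) :=
  (isCompact_tube θ ε p).isClosed.measurableSet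

theorem normal_coord_mem_Icc_of_mem_tube {θ ε : ℝ} {p x : ℝ × ℝ} (hx : x ∈ tube θ ε p) :
    -sin θ * x.1 + cos θ * x.2 ∈
      Set.Icc (-sin θ * p.1 + cos θ * p.2) (-sin θ * p.1 + cos θ * p.2 + ε) := by
  obtain ⟨s, -, t, ⟨ht₀, htε⟩, rfl⟩ := hx
  have h : -sin θ * (p + s • (cos θ, sin θ) + t • (-sin θ, cos θ)).1 +
      cos θ * (p + s • (cos θ, sin θ) + t • (-sin θ, cos θ)).2 =
      -sin θ * p.1 + cos θ * p.2 + t := by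
    simp only [Prod.fst_add, Prod.snd_add, Prod.smul_mk, smul_eq_mul]
    linear_combination t * sin_sq_add_cos_sq θ
  rw [h]
  constructor <;> linarith

theorem volume_tube_inter_tube_le {θ₁ θ₂ ε : ℝ} (h : sin (θ₂ - θ₁) ≠ 0) (hε : 0 ≤ ε)
    (p q : ℝ × ℝ) :
    volume (tube θ₁ ε p ∩ tube θ₂ ε q) ≤ ENNReal.ofReal (ε ^ 2 / |sin (θ₂ - θ₁)|) := by
  set f := Matrix.toLin (Basis.finTwoProd ℝ) (Basis.finTwoProd ℝ)
    !![-sin θ₁, cos θ₁; -sin θ₂, cos θ₂]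
  set a := -sin θ₁ * p.1 + cos θ₁ * p.2
  set b := -sin θ₂ * q.1 + cos θ₂ * q.2
  have hdet : LinearMap.det f = sin (θ₂ - θ₁) := by
    rw [LinearMap.det_toLin_finTwoProd, sin_sub]; ring
  have hsub : tube θ₁ ε p ∩ tube θ₂ ε q ⊆ f ⁻¹' (Set.Icc a (a + ε) ×ˢ Set.Icc b (b + ε)) :=
    fun x ⟨hx₁, hx₂⟩ => by
      simp only [Set.mem_preimage, f, Matrix.toLin_finTwoProd_apply, Set.mem_prod]
      exact ⟨normal_coord_mem_Icc_of_mem_tube hx₁, normal_coord_mem_Icc_of_mem_tube hx₂⟩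
  calc volume (tube θ₁ ε p ∩ tube θ₂ ε q)
      ≤ volume (f ⁻¹' (Set.Icc a (a + ε) ×ˢ Set.Icc b (b + ε))) := measure_mono hsub
    _ = ENNReal.ofReal (ε ^ 2 / |sin (θ₂ - θ₁)|) := by
      rw [Measure.addHaar_preimage_linearMap _ (hdet ▸ h), volume_Icc_prod_Icc, hdet,
        add_sub_cancel_left, add_sub_cancel_left, ← ENNReal.ofReal_mul hε,
        ← ENNReal.ofReal_mul (abs_nonneg _), abs_inv, inv_mul_eq_div, sq]

theorem volume_tube_inter_tube_le_of_le_pi_div_two {θ₁ θ₂ ε : ℝ} (hε : 0 ≤ ε)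
    (h₀ : 0 < θ₂ - θ₁) (hπ : θ₂ - θ₁ ≤ π / 2) (p q : ℝ × ℝ) :
    volume (tube θ₁ ε p ∩ tube θ₂ ε q) ≤ ENNReal.ofReal (π / 2 * ε ^ 2 / (θ₂ - θ₁)) := by
  have hjordan := mul_le_sin h₀.le hπ
  have hsin : 0 < sin (θ₂ - θ₁) := lt_of_lt_of_le (by positivity) hjordan
  refine (volume_tube_inter_tube_le hsin.ne' hε p q).trans (ENNReal.ofReal_le_ofReal ?_)
  calc ε ^ 2 / |sin (θ₂ - θ₁)| ≤ ε ^ 2 / (2 / π * (θ₂ - θ₁)) := by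
        rw [abs_of_pos hsin]; gcongr
    _ = π / 2 * ε ^ 2 / (θ₂ - θ₁) := by field_simp

theorem sum_measure_le_measure_biUnion_add_sum_inter {α : Type*} [MeasurableSpace α]
    (μ : Measure α) {s : ℕ → Set α} (hs : ∀ i, MeasurableSet (s i)) (n : ℕ) :
    ∑ i ∈ range n, μ (s i) ≤
      μ (⋃ i ∈ range n, s i) + ∑ i ∈ range n, ∑ j ∈ range i, μ (s i ∩ s j) := by
  induction n with
  | zero => simp
  | succ n ih =>
    set U := ⋃ i ∈ range n, s i
    have hU : ⋃ i ∈ range (n + 1), s i = s n ∪ U := by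
      rw [range_add_one, Finset.set_biUnion_insert]
    have hinter : μ (s n ∩ U) ≤ ∑ j ∈ range n, μ (s n ∩ s j) := by
      rw [Set.inter_iUnion₂]
      exact measure_biUnion_finset_le _ _
    calc ∑ i ∈ range (n + 1), μ (s i)
        ≤ μ U + ∑ i ∈ range n, ∑ j ∈ range i, μ (s i ∩ s j) + μ (s n) := by
          rw [sum_range_succ]; gcongr
      _ = μ (s n ∪ U) + μ (s n ∩ U) + ∑ i ∈ range n, ∑ j ∈ range i, μ (s i ∩ s j) := by
          rw [measure_union_add_inter' (hs n)]; ring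
      _ ≤ μ (s n ∪ U) + ∑ j ∈ range n, μ (s n ∩ s j) +
            ∑ i ∈ range n, ∑ j ∈ range i, μ (s i ∩ s j) := by gcongr
      _ = _ := by rw [hU, sum_range_succ]; ring

theorem sum_range_inv_sub_eq_harmonic (i : ℕ) :
    ∑ j ∈ range i, ((i : ℝ) - j)⁻¹ = harmonic i := by
  rw [harmonic, Rat.cast_sum, ← sum_range_reflect]
  refine sum_congr rfl fun j hj => ?_
  rw [mem_range] at hj
  push_cast [Nat.cast_sub (by omega : j ≤ i - 1), Nat.cast_sub (by omega : 1 ≤ i)]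
  ring_nf

theorem harmonic_le_one_add_log_of_le {i M : ℕ} (h : i ≤ M) : (harmonic i : ℝ) ≤ 1 + log M := by
  rcases i.eq_zero_or_pos with rfl | hi
  · rw [harmonic_zero, Rat.cast_zero]
    linarith [log_natCast_nonneg M]
  · exact (harmonic_le_one_add_log i).trans (by gcongr)

theorem volume_tube_inter_tube_le_inv_sub {δ ε : ℝ} (hδ : 0 < δ) (hε : 0 ≤ ε) {i j : ℕ}
    (hji : j < i) (hi : i * δ ≤ π / 2) (p q : ℝ × ℝ) :
    volume (tube (i * δ) ε p ∩ tube (j * δ) ε q) ≤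
      ENNReal.ofReal (π / 2 * ε ^ 2 / δ * ((i : ℝ) - j)⁻¹) := by
  have hji' : (j : ℝ) < i := by exact_mod_cast hji
  have hgap : (i : ℝ) * δ - j * δ ≤ π / 2 := by
    nlinarith [(Nat.cast_nonneg (α := ℝ) j)]
  rw [Set.inter_comm]
  refine (volume_tube_inter_tube_le_of_le_pi_div_two hε (by nlinarith) hgap _ _).trans_eq ?_
  rw [← sub_mul]
  field_simp

theorem sum_volume_tube_inter_le {δ ε : ℝ} (hδ : 0 < δ) (hε : 0 ≤ ε) {i M : ℕ} (hiM : i ≤ M)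
    (hM : M * δ ≤ π / 2) (p : ℕ → ℝ × ℝ) :
    ∑ j ∈ range i, volume (tube (i * δ) ε (p i) ∩ tube (j * δ) ε (p j)) ≤
      ENNReal.ofReal (π / 2 * ε ^ 2 / δ * (1 + log M)) := by
  have hi : (i : ℝ) * δ ≤ π / 2 := le_trans (by gcongr) hM
  calc ∑ j ∈ range i, volume (tube (i * δ) ε (p i) ∩ tube (j * δ) ε (p j))
      ≤ ∑ j ∈ range i, ENNReal.ofReal (π / 2 * ε ^ 2 / δ * ((i : ℝ) - j)⁻¹) :=
        sum_le_sum fun j hj => volume_tube_inter_tube_le_inv_sub hδ hε (mem_range.1 hj) hi _ _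
    _ = ENNReal.ofReal (π / 2 * ε ^ 2 / δ * harmonic i) := by
        rw [← ENNReal.ofReal_sum_of_nonneg, ← mul_sum, sum_range_inv_sub_eq_harmonic]
        intro j hj
        have : (j : ℝ) < i := by exact_mod_cast mem_range.1 hj
        have : 0 < (i : ℝ) - j := by linarith
        positivity
    _ ≤ ENNReal.ofReal (π / 2 * ε ^ 2 / δ * (1 + log M)) := by
        gcongr
        exact harmonic_le_one_add_log_of_le hiM

theorem ofReal_le_volume_biUnion_tube {δ ε : ℝ} (hδ : 0 < δ) (hε : 0 ≤ ε) {M : ℕ}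
    (hM : M * δ ≤ π / 2) (p : ℕ → ℝ × ℝ) :
    ENNReal.ofReal ((M + 1) * ε * (1 - π / 2 * (ε / δ) * (1 + log M))) ≤
      volume (⋃ i ∈ range (M + 1), tube (i * δ) ε (p i)) := by
  set B := π / 2 * ε ^ 2 / δ * (1 + log M) with hB
  have hB₀ : 0 ≤ B := mul_nonneg (by positivity) (by linarith [log_natCast_nonneg M])
  have hsum : ∑ i ∈ range (M + 1), volume (tube (i * δ) ε (p i)) =
      ENNReal.ofReal ((M + 1) * ε) := by
    rw [ENNReal.ofReal_mul (by positivity)]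
    simp only [volume_tube, sum_const, card_range, nsmul_eq_mul]
    norm_cast
  have hdouble : ∑ i ∈ range (M + 1), ∑ j ∈ range i,
      volume (tube (i * δ) ε (p i) ∩ tube (j * δ) ε (p j)) ≤ ENNReal.ofReal ((M + 1) * B) := by
    refine (sum_le_card_nsmul _ _ _ fun i hi =>
      sum_volume_tube_inter_le hδ hε (Nat.lt_succ_iff.1 (mem_range.1 hi)) hM p).trans_eq ?_
    rw [card_range, nsmul_eq_mul, ENNReal.ofReal_mul (p := (M : ℝ) + 1) (by positivity)]
    norm_cast
  calc ENNReal.ofReal ((M + 1) * ε * (1 - π / 2 * (ε / δ) * (1 + log M)))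
      = ENNReal.ofReal ((M + 1) * ε) - ENNReal.ofReal ((M + 1) * B) := by
        rw [← ENNReal.ofReal_sub _ (by positivity), hB]
        ring_nf
    _ ≤ volume (⋃ i ∈ range (M + 1), tube (i * δ) ε (p i)) := by
        rw [tsub_le_iff_right, ← hsum]
        exact (sum_measure_le_measure_biUnion_add_sum_inter volume
          (fun i => measurableSet_tube _ _ _) _).trans (by gcongr)

theorem tendsto_rpow_mul_two_sub_log_nhdsGT_zero {r : ℝ} (hr : 0 < r) :
    Tendsto (fun ε : ℝ => ε ^ r * (2 - log ε)) (𝓝[>] 0) (𝓝 0) := by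
  have hpow : Tendsto (fun ε : ℝ => ε ^ r) (𝓝[>] 0) (𝓝 0) := by
    simpa [zero_rpow hr.ne'] using
      (continuousAt_rpow_const 0 r (Or.inr hr.le)).tendsto.mono_left nhdsWithin_le_nhds
  simpa [mul_sub, mul_comm] using (hpow.const_mul 2).sub (tendsto_log_mul_rpow_nhdsGT_zero hr)

theorem half_mul_rpow_le_of_small {c ε α : ℝ} (hc : 0 < c) (hcπ : c ≤ π / 2) (hε : 0 < ε)
    (hε1 : ε < 1) (hα : α ≤ 1) (hsmall : π * (ε ^ (1 - α) * (2 - log ε)) ≤ 1) :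
    c / 2 * ε ^ (1 - α) ≤ (⌊c / ε ^ α⌋₊ + 1) * ε *
      (1 - π / 2 * (ε / ε ^ α) * (1 + log ⌊c / ε ^ α⌋₊)) := by
  set δ := ε ^ α
  set M := ⌊c / δ⌋₊
  have hδ : 0 < δ := rpow_pos_of_pos hε α
  have hx : ε / δ = ε ^ (1 - α) := by rw [rpow_sub hε, rpow_one]
  have hlogε : log ε < 0 := log_neg hε hε1
  have hlogM : 1 + log M ≤ 2 - log ε := by
    rcases M.eq_zero_or_pos with hM | hM
    · rw [hM, Nat.cast_zero, log_zero]; linarith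
    have hlogc : log c ≤ 1 := by linarith [log_le_sub_one_of_pos hc, pi_lt_four]
    have : log M ≤ log c - α * log ε := by
      rw [← log_rpow hε, ← log_div hc.ne' hδ.ne']
      exact log_le_log (by exact_mod_cast hM) (Nat.floor_le (by positivity))
    nlinarith
  have hfactor : π / 2 * (ε / δ) * (1 + log M) ≤ 1 / 2 := by
    have hx₀ : 0 ≤ π / 2 * ε ^ (1 - α) := by positivity
    rw [hx]
    linarith [mul_le_mul_of_nonneg_left hlogM hx₀]
  have hfloor : c / δ ≤ M + 1 := (Nat.lt_floor_add_one _).le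
  calc c / 2 * ε ^ (1 - α) = c / δ * ε / 2 := by rw [← hx]; ring
    _ ≤ (M + 1) * ε / 2 := by gcongr
    _ ≤ (M + 1) * ε * (1 - π / 2 * (ε / δ) * (1 + log M)) := by
        have : 0 ≤ (M + 1) * ε := by positivity
        nlinarith

theorem stmt_2 (c α : ℝ) (hc : c ∈ Set.Ioc 0 (2 * π)) (hα : α ∈ Set.Ioo (0 : ℝ) 1) :
    ∃ A > (0 : ℝ), ∃ ε₀ > (0 : ℝ), ∀ ε : ℝ, 0 < ε → ε < ε₀ →
      ∀ p : ℕ → ℝ × ℝ,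
        ENNReal.ofReal (A * ε ^ (1 - α)) ≤
          volume (⋃ i ∈ Finset.range (⌊c / ε ^ α⌋₊ + 1), tube (i * ε ^ α) ε (p i)) := by
  set c' := min c (π / 2)
  have hc' : 0 < c' := lt_min hc.1 (by positivity)
  have hsmall : ∀ᶠ ε in 𝓝[>] (0 : ℝ), ε < 1 ∧ π * (ε ^ (1 - α) * (2 - log ε)) ≤ 1 := by
    refine (eventually_nhdsWithin_of_eventually_nhds (gt_mem_nhds one_pos)).and ?_
    have := (tendsto_rpow_mul_two_sub_log_nhdsGT_zero (sub_pos.2 hα.2)).const_mul π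
    rw [mul_zero] at this
    exact this.eventually (ge_mem_nhds one_pos)
  obtain ⟨ε₀, hε₀, hsub⟩ := mem_nhdsGT_iff_exists_Ioo_subset.1 hsmall
  refine ⟨c' / 2, by positivity, ε₀, hε₀, fun ε hε hεε₀ p => ?_⟩
  obtain ⟨hε1, hεsmall⟩ := hsub ⟨hε, hεε₀⟩
  have hδ : 0 < ε ^ α := rpow_pos_of_pos hε α
  set M := ⌊c' / ε ^ α⌋₊
  have hM : (M : ℝ) * ε ^ α ≤ π / 2 :=
    ((le_div_iff₀ hδ).1 (Nat.floor_le (by positivity))).trans (min_le_right _ _)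
  have hMN : M ≤ ⌊c / ε ^ α⌋₊ := Nat.floor_mono (by gcongr; exact min_le_left _ _)
  calc ENNReal.ofReal (c' / 2 * ε ^ (1 - α))
      ≤ ENNReal.ofReal (((M : ℝ) + 1) * ε * (1 - π / 2 * (ε / ε ^ α) * (1 + log M))) :=
        ENNReal.ofReal_le_ofReal
          (half_mul_rpow_le_of_small hc' (min_le_right _ _) hε hε1 hα.2.le hεsmall)
    _ ≤ volume (⋃ i ∈ range (M + 1), tube (i * ε ^ α) ε (p i)) :=
        ofReal_le_volume_biUnion_tube hδ hε.le hM p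
    _ ≤ _ := measure_mono
        (Set.biUnion_subset_biUnion_left (coe_subset.2 (range_subset_range.2 (by omega))))
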